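/- arXiv:math/0401133 — 4 statements merged into one kernel-verified Lean document; each statement's English description precedes it below -/
import Mathlib

section
/- Let G be a finitely generated group with subgroups H and K, let X be a nontrivial H-almost invariant subset of G and let Y be a nontrivial K-almost invariant subset of G. Then X ∩ Y is H-finite if and only if X ∩ Y is K-finite. Consequently, crossing is symmetric: Y crosses X if and only if X crosses Y. -/
open Pointwise

universe u v

section Defs

variable {G : Type v} [Group G]

/-- `W` is `H`-finite: `W` is contained in the union of finitely many left cosets of `H`. -/
def HFin (H : Subgroup G) (W : Set G) : Prop :=
  ∃ F : Finset G, W ⊆ (H : Set G) * (F : Set G)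

/-- `X` is an `H`-almost invariant subset of `G`: `HX = X` and for every `a : G`
the symmetric difference of `X` and `Xa` is `H`-finite. -/
def AlmostInv (H : Subgroup G) (X : Set G) : Prop :=
  (∀ h ∈ H, h • X = X) ∧
    ∀ a : G, HFin H ((X \ (· * a) '' X) ∪ ((· * a) '' X \ X))

/-- `X` is a nontrivial `H`-almost invariant subset of `G`. -/
def NontrivAI (H : Subgroup G) (X : Set G) : Prop :=
  AlmostInv H X ∧ ¬ HFin H X ∧ ¬ HFin H Xᶜ

/-- `X ~ Y` : the symmetric difference of `X` and `Y` is `H`-finite. -/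
def AIEquiv (H : Subgroup G) (X Y : Set G) : Prop :=
  HFin H ((X \ Y) ∪ (Y \ X))

/-- `H` and `K` are commensurable: `H ⊓ K` has finite index in both `H` and `K`. -/
def CommSub (H K : Subgroup G) : Prop :=
  ((H ⊓ K).subgroupOf H).index ≠ 0 ∧ ((H ⊓ K).subgroupOf K).index ≠ 0

/-- `E(X₁,…,Xₙ)`: the set of all translates of the `Xᵢ` and of their complements. -/
def ESet {ι : Type*} (X : ι → Set G) : Set (Set G) :=
  {A | ∃ (i : ι) (g : G), A = g • X i ∨ A = (g • X i)ᶜ}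

/-- `W` is small with respect to `U ∈ E`: `W` is `gHᵢg⁻¹`-finite, where `U = gXᵢ` or
`U = (gXᵢ)ᶜ` (so that `U` is almost invariant over `gHᵢg⁻¹`). -/
def SmallFor {ι : Type*} (H : ι → Subgroup G) (X : ι → Set G) (U W : Set G) : Prop :=
  ∃ (i : ι) (g : G), (U = g • X i ∨ U = (g • X i)ᶜ) ∧ HFin (H i) (g⁻¹ • W)

/-- Condition (*) (good position): if two of the four corners of a pair of elements
of `E` are small, then one of the four corners is empty. -/
def GoodPos {ι : Type*} (H : ι → Subgroup G) (X : ι → Set G) : Prop :=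
  ∀ U ∈ ESet X, ∀ V ∈ ESet X, ∀ p q : Fin 4, p ≠ q →
    SmallFor H X U (![U ∩ V, U ∩ Vᶜ, Uᶜ ∩ V, Uᶜ ∩ Vᶜ] p) →
    SmallFor H X U (![U ∩ V, U ∩ Vᶜ, Uᶜ ∩ V, Uᶜ ∩ Vᶜ] q) →
    U ∩ V = ∅ ∨ U ∩ Vᶜ = ∅ ∨ Uᶜ ∩ V = ∅ ∨ Uᶜ ∩ Vᶜ = ∅

/-- Almost inclusion: `U ≤ V` iff `U ∩ Vᶜ` is empty or is the only small corner
among the four corners of `(U, V)`. -/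
def LeE {ι : Type*} (H : ι → Subgroup G) (X : ι → Set G) (U V : Set G) : Prop :=
  U ∩ Vᶜ = ∅ ∨
    (SmallFor H X U (U ∩ Vᶜ) ∧ ¬ SmallFor H X U (U ∩ V) ∧
      ¬ SmallFor H X U (Uᶜ ∩ V) ∧ ¬ SmallFor H X U (Uᶜ ∩ Vᶜ))

/-- `E(Y)` for a single almost invariant set. -/
def ESet1 (Y : Set G) : Set (Set G) := ESet (fun _ : Unit => Y)

def SmallFor1 (K : Subgroup G) (Y : Set G) (U W : Set G) : Prop :=
  SmallFor (fun _ : Unit => K) (fun _ : Unit => Y) U W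

def GoodPos1 (K : Subgroup G) (Y : Set G) : Prop :=
  GoodPos (fun _ : Unit => K) (fun _ : Unit => Y)

def LeE1 (K : Subgroup G) (Y : Set G) (U V : Set G) : Prop :=
  LeE (fun _ : Unit => K) (fun _ : Unit => Y) U V

/-- `Y` is invertible: some `g ∈ G` satisfies `gY = Y*`. -/
def InvertibleSet (Y : Set G) : Prop := ∃ g : G, g • Y = Yᶜ

/-- There is a `G`-equivariant bijection `E(Y₁) → E(Y₂)` preserving complementation,
the partial order of almost inclusion, and equivalence classes. -/
def GoodBij (K₁ : Subgroup G) (Y₁ : Set G) (K₂ : Subgroup G) (Y₂ : Set G) : Prop :=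
  ∃ φ : Set G → Set G,
    Set.BijOn φ (ESet1 Y₁) (ESet1 Y₂) ∧
    (∀ (g : G), ∀ U ∈ ESet1 Y₁, φ (g • U) = g • φ U) ∧
    (∀ U ∈ ESet1 Y₁, ∀ V ∈ ESet1 Y₁, LeE1 K₁ Y₁ U V → LeE1 K₂ Y₂ (φ U) (φ V)) ∧
    (∀ U ∈ ESet1 Y₁, φ Uᶜ = (φ U)ᶜ) ∧
    (∀ U ∈ ESet1 Y₁, SmallFor1 K₁ Y₁ U ((U \ φ U) ∪ (φ U \ U)))

/-- `x` lies in the ball of radius `R` about `g` in the word metric determined by `S`. -/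
def InBall (S : Finset G) (R : ℕ) (g x : G) : Prop :=
  ∃ l : List G, (∀ s ∈ l, s ∈ S ∨ s⁻¹ ∈ S) ∧ l.length ≤ R ∧ x = g * l.prod

/-- Some edge of the Cayley graph of `(G,S)` with one endpoint in `A` and the other in
`Aᶜ` has an endpoint in the ball `N_R(g)`. -/
def BNear (S : Finset G) (R : ℕ) (g : G) (A : Set G) : Prop :=
  ∃ x s : G, (s ∈ S ∨ s⁻¹ ∈ S) ∧
    ((x ∈ A ∧ x * s ∉ A) ∨ (x ∉ A ∧ x * s ∈ A)) ∧
    (InBall S R g x ∨ InBall S R g (x * s))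

/-- `E_R* = E − E_R`: the elements of `E` no edge of whose coboundary meets `N_R(g)`. -/
def ERstar (S : Finset G) (R : ℕ) (g : G) {ι : Type*} (X : ι → Set G) : Set (Set G) :=
  {A | A ∈ ESet X ∧ ¬ BNear S R g A}

/-- `U_g = {A ∈ E_R* : g ∈ A}`. -/
def UgSet (S : Finset G) (R : ℕ) (g : G) {ι : Type*} (X : ι → Set G) : Set (Set G) :=
  {A | A ∈ ERstar S R g X ∧ g ∈ A}

/-- `U₁ = U_g ∪ {B ∈ E_R : ∃ A ∈ U_g, A ≤ B}`. -/
def U1Set {ι : Type*} (H : ι → Subgroup G) (S : Finset G) (R : ℕ) (g : G) (X : ι → Set G) :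
    Set (Set G) :=
  UgSet S R g X ∪
    {B | (B ∈ ESet X ∧ BNear S R g B) ∧ ∃ A ∈ UgSet S R g X, LeE H X A B}

/-- `V₁ = E − (U₁ ∪ U₁*)`. -/
def V1Set {ι : Type*} (H : ι → Subgroup G) (S : Finset G) (R : ℕ) (g : G) (X : ι → Set G) :
    Set (Set G) :=
  ESet X \ (U1Set H S R g X ∪ (fun B : Set G => Bᶜ) '' U1Set H S R g X)

/-- `U₂ = U₁ ∪ {A₁} ∪ {B ∈ V₁ : A₁ ≤ B}`. -/
def U2Set {ι : Type*} (H : ι → Subgroup G) (S : Finset G) (R : ℕ) (g : G) (X : ι → Set G)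
    (A₁ : Set G) : Set (Set G) :=
  U1Set H S R g X ∪ {A₁} ∪ {B | B ∈ V1Set H S R g X ∧ LeE H X A₁ B}

/-- `G` is (canonically isomorphic to) the amalgamated free product `A *_C B` of its
subgroups `A` and `B` over `C`, expressed via the universal property of the pushout. -/
def IsAmalgam (C A B : Subgroup G) : Prop :=
  C ≤ A ∧ C ≤ B ∧
    ∀ (P : Type u) [Group P] (f : ↥A →* P) (g : ↥B →* P),
      (∀ (c : G) (hcA : c ∈ A) (hcB : c ∈ B), c ∈ C → f ⟨c, hcA⟩ = g ⟨c, hcB⟩) →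
      ∃! h : G →* P, (∀ (a : G) (ha : a ∈ A), h a = f ⟨a, ha⟩) ∧
        (∀ (b : G) (hb : b ∈ B), h b = g ⟨b, hb⟩)

/-- `G` is (canonically isomorphic to) an HNN extension with associated subgroup `C`:
there are a base subgroup `K`, associated subgroups `C, D ≤ K`, an isomorphism
`φ : C ≃ D` and a stable letter `t` conjugating `C` to `D` via `φ`, such that `G` has
the universal property of the HNN extension. -/
def IsHNNOver (C : Subgroup G) : Prop :=
  ∃ (K D : Subgroup G) (t : G) (φ : ↥C ≃* ↥D),
    C ≤ K ∧ D ≤ K ∧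
    (∀ c : ↥C, t⁻¹ * (c : G) * t = ((φ c : ↥D) : G)) ∧
    ∀ (P : Type u) [Group P] (f : ↥K →* P) (p : P),
      (∀ (c : ↥C) (hc : (c : G) ∈ K) (hc' : ((φ c : ↥D) : G) ∈ K),
        p⁻¹ * f ⟨(c : G), hc⟩ * p = f ⟨((φ c : ↥D) : G), hc'⟩) →
      ∃! h : G →* P, (∀ (k : G) (hk : k ∈ K), h k = f ⟨k, hk⟩) ∧ h t = p

/-- `G` splits over `C`: `G` is an amalgamated free product `A *_C B` in which `C` is a
proper subgroup of both `A` and `B`, or an HNN extension with associated subgroup `C`. -/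
def SplitsOver (C : Subgroup G) : Prop :=
  (∃ A B : Subgroup G, C ≠ A ∧ C ≠ B ∧ IsAmalgam.{u} C A B) ∨ IsHNNOver.{u} C

end Defs

/-!
Suppose `X ∩ Y ⊆ HF` with `F` finite, and pick `x₀ ∈ X` outside `HF`. For `g = hf ∈ X ∩ Y`
the point `hx₀ = g(f⁻¹x₀)` lies in `X` but not in `Y` (else it would lie in `HF`, and so would
`x₀`). Hence `g` lies in `Y − Ya` with `a = x₀⁻¹f`, which is `K`-finite as `Y` is
`K`-almost invariant; there are only finitely many such `a`. Applying this to the complements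
of `X` and `Y` gives the symmetry of crossing.
-/

section AlmostInvariant

variable {G : Type*} [Group G] {H K : Subgroup G} {X Y : Set G}

theorem HFin.mono {W W' : Set G} (hW : W ⊆ W') (h : HFin H W') : HFin H W :=
  let ⟨F, hF⟩ := h
  ⟨F, hW.trans hF⟩

theorem HFin.biUnion {ι : Type*} (s : Finset ι) {W : ι → Set G}
    (h : ∀ i ∈ s, HFin H (W i)) : HFin H (⋃ i ∈ s, W i) := by
  classical
  choose! F hF using h
  refine ⟨s.biUnion F, Set.iUnion₂_subset fun i hi => (hF i hi).trans ?_⟩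
  gcongr
  exact Finset.coe_subset.mpr (Finset.subset_biUnion_of_mem F hi)

theorem mem_subgroup_mul_of_mul_mem {F : Set G} {h x : G} (hh : h ∈ H)
    (hx : h * x ∈ (H : Set G) * F) : x ∈ (H : Set G) * F := by
  obtain ⟨k, hk, f, hf, hkf⟩ := hx
  exact ⟨h⁻¹ * k, H.mul_mem (H.inv_mem hh) hk, f, hf, by simp [mul_assoc, hkf]⟩

theorem AlmostInv.hFin_diff_image (hY : AlmostInv K Y) (a : G) :
    HFin K (Y \ (· * a) '' Y) :=
  (hY.2 a).mono Set.subset_union_left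

theorem AlmostInv.compl (hX : AlmostInv H X) : AlmostInv H Xᶜ := by
  refine ⟨fun h hh => by rw [Set.smul_set_compl, hX.1 h hh], fun a => ?_⟩
  have hcompl : (· * a) '' Xᶜ = ((· * a) '' X)ᶜ :=
    Set.image_compl_eq (Group.mulRight_bijective a)
  simpa only [hcompl, ← Set.symmDiff_def, compl_symmDiff_compl] using hX.2 a

theorem NontrivAI.compl (hX : NontrivAI H X) : NontrivAI H Xᶜ :=
  ⟨hX.1.compl, hX.2.2, by simpa only [compl_compl] using hX.2.1⟩

theorem HFin.inter_of_almostInv (hXH : ∀ h ∈ H, h • X = X) (hX : ¬ HFin H X)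
    (hY : AlmostInv K Y) (hXY : HFin H (X ∩ Y)) : HFin K (X ∩ Y) := by
  obtain ⟨F, hF⟩ := hXY
  obtain ⟨x₀, hx₀X, hx₀F⟩ := Set.not_subset.mp fun hsub => hX ⟨F, hsub⟩
  refine (HFin.biUnion F fun f _ => hY.hFin_diff_image (x₀⁻¹ * f)).mono ?_
  rintro g ⟨hgX, hgY⟩
  obtain ⟨h, hh, f, hf, rfl⟩ := hF ⟨hgX, hgY⟩
  have hhx₀X : h * x₀ ∈ X := hXH h hh ▸ Set.smul_mem_smul_set hx₀X
  have hhx₀Y : h * x₀ ∉ Y := fun hY' =>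
    hx₀F (mem_subgroup_mul_of_mul_mem hh (hF ⟨hhx₀X, hY'⟩))
  refine Set.mem_biUnion (Finset.mem_coe.mpr hf) ⟨hgY, ?_⟩
  rintro ⟨y, hy, hya⟩
  obtain rfl : y = h * x₀ := by simpa [mul_assoc] using congrArg (· * (f⁻¹ * x₀)) hya
  exact hhx₀Y hy

theorem NontrivAI.hFin_inter_iff (hX : NontrivAI H X) (hY : NontrivAI K Y) :
    HFin H (X ∩ Y) ↔ HFin K (X ∩ Y) := by
  refine ⟨HFin.inter_of_almostInv hX.1.1 hX.2.1 hY.1, fun h => ?_⟩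
  rw [Set.inter_comm] at h ⊢
  exact h.inter_of_almostInv hY.1.1 hY.2.1 hX.1

end AlmostInvariant

theorem smallness_symmetric_and_crossing_symmetric_general
    {G : Type*} [Group G] (H K : Subgroup G) (X Y : Set G)
    (hX : NontrivAI H X) (hY : NontrivAI K Y) :
    (HFin H (X ∩ Y) ↔ HFin K (X ∩ Y)) ∧
    ((¬ HFin H (X ∩ Y) ∧ ¬ HFin H (Xᶜ ∩ Y) ∧ ¬ HFin H (X ∩ Yᶜ) ∧ ¬ HFin H (Xᶜ ∩ Yᶜ)) ↔
      (¬ HFin K (X ∩ Y) ∧ ¬ HFin K (X ∩ Yᶜ) ∧ ¬ HFin K (Xᶜ ∩ Y) ∧ ¬ HFin K (Xᶜ ∩ Yᶜ))) := by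
  have h₁ := hX.hFin_inter_iff hY
  have h₂ := hX.compl.hFin_inter_iff hY
  have h₃ := hX.hFin_inter_iff hY.compl
  have h₄ := hX.compl.hFin_inter_iff hY.compl
  exact ⟨h₁, by tauto⟩

/-- If `X` is a nontrivial `H`-almost invariant subset of `G` and `Y` is a nontrivial
`K`-almost invariant subset of `G`, then `X ∩ Y` is `H`-finite iff it is `K`-finite;
consequently `Y` crosses `X` iff `X` crosses `Y`. -/
theorem smallness_symmetric_and_crossing_symmetric
    {G : Type*} [Group G] (hG : Group.FG G) (H K : Subgroup G) (X Y : Set G)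
    (hX : NontrivAI H X) (hY : NontrivAI K Y) :
    (HFin H (X ∩ Y) ↔ HFin K (X ∩ Y)) ∧
    ((¬ HFin H (X ∩ Y) ∧ ¬ HFin H (Xᶜ ∩ Y) ∧ ¬ HFin H (X ∩ Yᶜ) ∧ ¬ HFin H (Xᶜ ∩ Yᶜ)) ↔
      (¬ HFin K (X ∩ Y) ∧ ¬ HFin K (X ∩ Yᶜ) ∧ ¬ HFin K (Xᶜ ∩ Y) ∧ ¬ HFin K (Xᶜ ∩ Yᶜ))) :=
  smallness_symmetric_and_crossing_symmetric_general H K X Y hX hY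
end

section
/- Let G be a finitely generated group, let X be a nontrivial H-almost invariant subset of G and let Y be a nontrivial K-almost invariant subset of G. If the symmetric difference of X and Y is H-finite, then H and K are commensurable subgroups of G (H ∩ K has finite index in both H and K), and the symmetric difference of X and Y is also K-finite. -/
open Pointwise

universe u v

/-! Almost invariance of `X` passes to `Y` with the same subgroup `H`, so the exit sets
`{y ∈ Y | y c ∉ Y}` are both `H`-finite and `K`-finite. A subgroup `M` with `M y₀ ⊆ Y` and
`M y₁ ⊆ Yᶜ` translates into such an exit set, hence is `L`-finite whenever the exit sets are.
Taking `M = K` (points of `Y` and `Yᶜ`) shows that `K` is `H`-finite; taking `M = H` (points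
of `X` and `Xᶜ` outside the `H`-finite set `X ∆ Y`, whose `H`-orbits then stay in `Y` and
`Yᶜ`) shows that `H` is `K`-finite. -/

open scoped symmDiff

section AlmostInvariant

variable {G : Type*} [Group G]

namespace HFin

variable {L : Subgroup G} {W W₁ W₂ : Set G}

lemma mono_s1 (hW : HFin L W₂) (h : W₁ ⊆ W₂) : HFin L W₁ :=
  let ⟨F, hF⟩ := hW
  ⟨F, h.trans hF⟩

lemma union (h₁ : HFin L W₁) (h₂ : HFin L W₂) : HFin L (W₁ ∪ W₂) := by
  classical
  obtain ⟨F₁, hF₁⟩ := h₁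
  obtain ⟨F₂, hF₂⟩ := h₂
  refine ⟨F₁ ∪ F₂, ?_⟩
  rw [Finset.coe_union, Set.mul_union]
  exact Set.union_subset_union hF₁ hF₂

lemma image_mul_right (hW : HFin L W) (c : G) : HFin L ((· * c) '' W) := by
  classical
  obtain ⟨F, hF⟩ := hW
  refine ⟨F * {c}, ?_⟩
  rw [← Set.mul_singleton, Finset.coe_mul, Finset.coe_singleton, ← mul_assoc]
  exact Set.mul_subset_mul_right hF

lemma trans {M : Subgroup G} (hM : HFin L M) (hW : HFin M W) : HFin L W := by
  classical
  obtain ⟨T, hT⟩ := hM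
  obtain ⟨F, hF⟩ := hW
  refine ⟨T * F, ?_⟩
  rw [Finset.coe_mul, ← mul_assoc]
  exact hF.trans (Set.mul_subset_mul_right hT)

lemma relIndex_ne_zero {M : Subgroup G} (hM : HFin L M) : L.relIndex M ≠ 0 := by
  obtain ⟨F, hF⟩ := hM
  have cover : ∀ m : M, ∃ f : F, (m : G)⁻¹ * (f : G)⁻¹ ∈ L := by
    intro m
    obtain ⟨l, hl, f, hf, hlf⟩ := Set.mem_mul.mp (hF (inv_mem m.2))
    exact ⟨⟨f, hf⟩, by rw [← hlf, mul_inv_cancel_right]; exact hl⟩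
  choose t ht using cover
  -- `m⁻¹ m' = (m⁻¹ f⁻¹) (m'⁻¹ f⁻¹)⁻¹` lies in `L` when `m` and `m'` share the coset `L f`
  have : Finite (M ⧸ L.subgroupOf M) := by
    refine Finite.of_injective (fun q => t q.out) fun q q' hq => ?_
    rw [← q.out_eq', ← q'.out_eq', QuotientGroup.eq, Subgroup.mem_subgroupOf]
    have hmem := mul_mem (ht q.out) (inv_mem (ht q'.out))
    convert hmem using 1
    simp [hq, mul_assoc]
  exact Subgroup.index_ne_zero_of_finite

end HFin

lemma commSub_of_hfin {H K : Subgroup G} (hKH : HFin K H) (hHK : HFin H K) : CommSub H K := by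
  constructor
  · change (H ⊓ K).relIndex H ≠ 0
    rw [Subgroup.inf_relIndex_left]
    exact hKH.relIndex_ne_zero
  · change (H ⊓ K).relIndex K ≠ 0
    rw [Subgroup.inf_relIndex_right]
    exact hHK.relIndex_ne_zero

lemma hfin_symmDiff_image_mul_right {L : Subgroup G} {X Y : Set G}
    (hX : ∀ c : G, HFin L (X ∆ ((· * c) '' X))) (hXY : HFin L (X ∆ Y)) (c : G) :
    HFin L (Y ∆ ((· * c) '' Y)) := by
  have hsub : Y ∆ ((· * c) '' Y) ⊆ X ∆ Y ∪ X ∆ ((· * c) '' X) ∪ (· * c) '' (X ∆ Y) := by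
    rw [Set.image_symmDiff (mul_left_injective c), symmDiff_comm X Y, Set.union_assoc]
    exact le_trans (symmDiff_triangle _ X _) (sup_le_sup_left (symmDiff_triangle _ _ _) _)
  exact ((hXY.union (hX c)).union (hXY.image_mul_right c)).mono_s1 hsub

lemma hfin_of_image_mul_right_subset {L : Subgroup G} {M Y : Set G} {y₀ y₁ : G}
    (hY : ∀ c : G, HFin L (Y ∆ ((· * c) '' Y)))
    (h₀ : (· * y₀) '' M ⊆ Y) (h₁ : (· * y₁) '' M ⊆ Yᶜ) : HFin L M := by
  -- right multiplication by `y₁⁻¹ y₀` carries `m y₁ ∉ Y` to `m y₀ ∈ Y`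
  have hexit : (· * y₀) '' M ⊆ Y ∆ ((· * (y₁⁻¹ * y₀)) '' Y) := by
    rintro _ ⟨m, hm, rfl⟩
    refine Or.inl ⟨h₀ ⟨m, hm, rfl⟩, ?_⟩
    rintro ⟨y, hy, hyc⟩
    have hy_eq : y = m * y₁ := by
      rw [← mul_inv_eq_of_eq_mul hyc.symm]
      group
    apply h₁ ⟨m, hm, rfl⟩
    show m * y₁ ∈ Y
    rwa [← hy_eq]
  have hM := ((hY _).mono_s1 hexit).image_mul_right y₀⁻¹
  simpa only [Set.image_image, mul_inv_cancel_right, Set.image_id'] using hM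

lemma image_mul_right_subset_of_smul_eq {H : Subgroup G} {X : Set G}
    (hX : ∀ h ∈ H, h • X = X) {g : G} (hg : g ∈ X) : (· * g) '' (H : Set G) ⊆ X := by
  rintro _ ⟨a, ha, rfl⟩
  rw [← hX a ha]
  exact Set.smul_mem_smul_set hg

lemma image_mul_right_subset_of_symmDiff_subset {H : Subgroup G} {X Y F : Set G}
    (hX : ∀ h ∈ H, h • X = X) (hXY : X ∆ Y ⊆ (H : Set G) * F) {g : G} (hg : g ∈ X)
    (hgF : g ∉ (H : Set G) * F) : (· * g) '' (H : Set G) ⊆ Y := by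
  rintro _ ⟨a, ha, rfl⟩
  by_contra hY
  obtain ⟨b, hb, f, hf, hbf⟩ :=
    Set.mem_mul.mp (hXY (Or.inl ⟨image_mul_right_subset_of_smul_eq hX hg ⟨a, ha, rfl⟩, hY⟩))
  refine hgF ⟨a⁻¹ * b, mul_mem (inv_mem ha) hb, f, hf, ?_⟩
  simp only at hbf ⊢
  rw [mul_assoc, hbf, inv_mul_cancel_left]

end AlmostInvariant

theorem equivalent_implies_commensurable_general
    {G : Type*} [Group G] (H K : Subgroup G) (X Y : Set G)
    (hX : NontrivAI H X) (hY : NontrivAI K Y)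
    (h : HFin H ((X \ Y) ∪ (Y \ X))) :
    CommSub H K ∧ HFin K ((X \ Y) ∪ (Y \ X)) := by
  obtain ⟨⟨hXinv, hXai⟩, hXnf, hXcnf⟩ := hX
  obtain ⟨⟨hYinv, hYai⟩, hYnf, hYcnf⟩ := hY
  have hYcinv : ∀ k ∈ K, k • Yᶜ = Yᶜ := fun k hk => by rw [Set.smul_set_compl, hYinv k hk]
  have hXcinv : ∀ a ∈ H, a • Xᶜ = Xᶜ := fun a ha => by rw [Set.smul_set_compl, hXinv a ha]
  obtain ⟨y₀, hy₀, -⟩ := Set.not_subset.mp fun hsub => hYnf ⟨∅, hsub⟩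
  obtain ⟨y₁, hy₁, -⟩ := Set.not_subset.mp fun hsub => hYcnf ⟨∅, hsub⟩
  have hHK : HFin H K :=
    hfin_of_image_mul_right_subset (hfin_symmDiff_image_mul_right hXai h)
      (image_mul_right_subset_of_smul_eq hYinv hy₀)
      (image_mul_right_subset_of_smul_eq hYcinv hy₁)
  obtain ⟨F, hF⟩ := h
  obtain ⟨g, hg, hgF⟩ := Set.not_subset.mp fun hsub => hXnf ⟨F, hsub⟩
  obtain ⟨g', hg', hg'F⟩ := Set.not_subset.mp fun hsub => hXcnf ⟨F, hsub⟩
  have hKH : HFin K H :=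
    hfin_of_image_mul_right_subset hYai
      (image_mul_right_subset_of_symmDiff_subset hXinv hF hg hgF)
      (image_mul_right_subset_of_symmDiff_subset hXcinv
        ((compl_symmDiff_compl (a := X) (b := Y)).subset.trans hF) hg' hg'F)
  exact ⟨commSub_of_hfin hKH hHK, hKH.trans ⟨F, hF⟩⟩

/-- If the symmetric difference of a nontrivial `H`-almost invariant set `X` and a
nontrivial `K`-almost invariant set `Y` is `H`-finite, then `H` and `K` are commensurable
and the symmetric difference is also `K`-finite. -/
theorem equivalent_implies_commensurable
    {G : Type*} [Group G] (hG : Group.FG G) (H K : Subgroup G) (X Y : Set G)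
    (hX : NontrivAI H X) (hY : NontrivAI K Y)
    (h : HFin H ((X \ Y) ∪ (Y \ X))) :
    CommSub H K ∧ HFin K ((X \ Y) ∪ (Y \ X)) :=
  equivalent_implies_commensurable_general H K X Y hX hY h
end

section
/- Let G be a finitely generated group, let Y be a nontrivial H-almost invariant subset of G and Z a nontrivial K-almost invariant subset of G, suppose Y and Z are equivalent, and suppose each of Y and Z is in good position. Then the stabilisers of Y and Z under the left multiplication action of G on subsets of G are equal: {g ∈ G : gY = Y} = {g ∈ G : gZ = Z}. -/
open Pointwise

universe u v

/-
The stabiliser `J` of `Y` contains `H` and, because `Y` is nontrivial, is `H`-finite; hence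
`J * F`, a left `J`-invariant set containing `Y ∆ Z`, is `H`-finite and misses points of `Y` and
of `Yᶜ`. Off `J * F` the sets `Y` and `Z` coincide, so these points are a point of `Z` and a point
of `Zᶜ` whose `J`-orbits stay in `Z` and in `Zᶜ`; as `Z` is `K`-almost invariant, `J` is
`K`-finite. So every `g ∈ J` moves `Z` only by a `K`-finite set and has a power in `K`. Good
position applied to the pair `(Z, gZ)` now forces `gZ ⊆ Z` or `Z ⊆ gZ`, and a power of `g`
fixing `Z` turns either inclusion into an equality. Finally `Z ~ Y` over `K` as well, so the
argument runs symmetrically.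
-/

open scoped symmDiff

theorem mem_iff_mem_of_symmDiff_subset {α : Type*} {Y Z S : Set α} {x : α} (hD : Y ∆ Z ⊆ S)
    (hx : x ∉ S) : x ∈ Y ↔ x ∈ Z := by
  by_contra hne
  exact hx (hD (by rw [Set.mem_symmDiff]; tauto))

namespace HFin

variable {G : Type*} [Group G] {H : Subgroup G} {S W : Set G}

theorem mono_s5 (h : HFin H S) (hW : W ⊆ S) : HFin H W :=
  let ⟨F, hF⟩ := h
  ⟨F, hW.trans hF⟩

theorem of_subset_mul (h : HFin H S) (F : Finset G) (hW : W ⊆ S * F) : HFin H W := by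
  classical
  obtain ⟨F', hF'⟩ := h
  refine ⟨F' * F, hW.trans ?_⟩
  calc S * (F : Set G) ⊆ (H : Set G) * F' * F := Set.mul_subset_mul_right hF'
    _ = (H : Set G) * ↑(F' * F) := by rw [Finset.coe_mul, mul_assoc]

theorem exists_mem_notMem (h : HFin H S) (hW : ¬ HFin H W) : ∃ x ∈ W, x ∉ S := by
  by_contra! hWS
  exact hW (h.mono_s5 hWS)

theorem exists_pow_mem {g : G} (h : HFin H S) (hg : ∀ n : ℕ, g ^ n ∈ S) :
    ∃ m, 0 < m ∧ g ^ m ∈ H := by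
  obtain ⟨F, hF⟩ := h
  have hcoset : ∀ n : ℕ, ∃ f ∈ F, g ^ n * f⁻¹ ∈ H := fun n => by
    obtain ⟨k, hk, f, hf, hkf⟩ := Set.mem_mul.mp (hF (hg n))
    exact ⟨f, hf, by rwa [← hkf, mul_inv_cancel_right]⟩
  choose f hfF hfH using hcoset
  obtain ⟨i, j, hij, hfij⟩ := F.finite_toSet.exists_lt_map_eq_of_forall_mem (f := f) hfF
  refine ⟨j - i, Nat.sub_pos_of_lt hij, ?_⟩
  have hji : g ^ (j - i) = (g ^ j * (f j)⁻¹) * (g ^ i * (f i)⁻¹)⁻¹ := by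
    rw [hfij, mul_inv_rev, inv_inv, mul_assoc, inv_mul_cancel_left, ← pow_sub _ hij.le]
  rw [hji]
  exact mul_mem (hfH j) (inv_mem (hfH i))

end HFin

section AlmostInvariant

variable {G : Type*} [Group G] {H K : Subgroup G} {X Y Z : Set G}

open MulAction

theorem mul_mem_iff_of_mem_stabilizer {g x : G} (hg : g ∈ stabilizer G X) :
    g * x ∈ X ↔ x ∈ X := by
  have hgX := Set.smul_mem_smul_set_iff (a := g) (s := X) (x := x)
  rwa [mem_stabilizer_iff.mp hg] at hgX

theorem AlmostInv.le_stabilizer (hX : AlmostInv H X) : H ≤ stabilizer G X :=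
  fun h hh => mem_stabilizer_iff.mpr (hX.1 h hh)

/-- Each `p * a` lies in the `H`-finite set `X \ X * (b⁻¹ * a)`. -/
theorem AlmostInv.hFin_of_forall_mul_mem {P : Set G} {a b : G} (hX : AlmostInv H X)
    (ha : ∀ p ∈ P, p * a ∈ X) (hb : ∀ p ∈ P, p * b ∉ X) : HFin H P := by
  refine (hX.2 (b⁻¹ * a)).of_subset_mul {a⁻¹} fun p hp => ?_
  refine Set.mem_mul.mpr ⟨p * a, Or.inl ⟨ha p hp, ?_⟩, a⁻¹, by simp, mul_inv_cancel_right p a⟩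
  rintro ⟨x, hx, hxa⟩
  change x * (b⁻¹ * a) = p * a at hxa
  rw [← mul_assoc, mul_left_inj, mul_inv_eq_iff_eq_mul] at hxa
  exact hb p hp (hxa ▸ hx)

theorem NontrivAI.hFin_stabilizer (hX : NontrivAI H X) : HFin H (stabilizer G X : Set G) := by
  have hempty : HFin H ∅ := ⟨∅, Set.empty_subset _⟩
  obtain ⟨a, ha, -⟩ := hempty.exists_mem_notMem hX.2.1
  obtain ⟨b, hb, -⟩ := hempty.exists_mem_notMem hX.2.2
  exact hX.1.hFin_of_forall_mul_mem (a := a) (b := b)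
    (fun p hp => (mul_mem_iff_of_mem_stabilizer hp).mpr ha)
    (fun p hp => (mul_mem_iff_of_mem_stabilizer hp).not.mpr hb)

theorem AIEquiv.exists_symmDiff_subset_stabilizer_mul (hY : AlmostInv H Y)
    (h : AIEquiv H Y Z) : ∃ F : Finset G, Y ∆ Z ⊆ (stabilizer G Y : Set G) * F :=
  let ⟨F, hF⟩ := h
  ⟨F, hF.trans (Set.mul_subset_mul_right hY.le_stabilizer)⟩

/-- `J * F` is left invariant under the stabiliser `J` of `Y`, and off it `Z` agrees with `Y`. -/
theorem mul_mem_iff_of_symmDiff_subset {F : Set G} {g x : G}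
    (hD : Y ∆ Z ⊆ (stabilizer G Y : Set G) * F) (hg : g ∈ stabilizer G Y)
    (hx : x ∉ (stabilizer G Y : Set G) * F) : g * x ∈ Z ↔ x ∈ Z := by
  have hgx : g * x ∉ (stabilizer G Y : Set G) * F := by
    rintro ⟨j, hj, f, hf, hjf⟩
    refine hx ⟨g⁻¹ * j, mul_mem (inv_mem hg) hj, f, hf, ?_⟩
    change j * f = g * x at hjf
    change g⁻¹ * j * f = x
    rw [mul_assoc, hjf, inv_mul_cancel_left]
  rw [← mem_iff_mem_of_symmDiff_subset hD hgx, ← mem_iff_mem_of_symmDiff_subset hD hx,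
    mul_mem_iff_of_mem_stabilizer hg]

theorem symmDiff_smul_subset {F : Set G} {g : G}
    (hD : Y ∆ Z ⊆ (stabilizer G Y : Set G) * F) (hg : g ∈ stabilizer G Y) :
    Z ∆ (g • Z) ⊆ (stabilizer G Y : Set G) * F := by
  intro x hx
  by_contra hxF
  have hmove := mul_mem_iff_of_symmDiff_subset hD (inv_mem hg) hxF
  rw [Set.mem_symmDiff, Set.mem_smul_set_iff_inv_smul_mem, smul_eq_mul, hmove] at hx
  tauto

theorem hFin_stabilizer_of_symmDiff_subset {F : Finset G} (hY : NontrivAI H Y)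
    (hZ : AlmostInv K Z) (hD : Y ∆ Z ⊆ (stabilizer G Y : Set G) * F) :
    HFin K (stabilizer G Y : Set G) := by
  have hJF : HFin H ((stabilizer G Y : Set G) * F) := hY.hFin_stabilizer.of_subset_mul F le_rfl
  obtain ⟨a, ha, haF⟩ := hJF.exists_mem_notMem hY.2.1
  obtain ⟨b, hb, hbF⟩ := hJF.exists_mem_notMem hY.2.2
  exact hZ.hFin_of_forall_mul_mem (a := a) (b := b)
    (fun p hp => (mul_mem_iff_of_symmDiff_subset hD hp haF).mpr
      ((mem_iff_mem_of_symmDiff_subset hD haF).mp ha))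
    (fun p hp => (mul_mem_iff_of_symmDiff_subset hD hp hbF).not.mpr
      ((mem_iff_mem_of_symmDiff_subset hD hbF).not.mp hb))

theorem AIEquiv.symm_of_nontrivAI (hY : NontrivAI H Y) (hZ : AlmostInv K Z)
    (h : AIEquiv H Y Z) : AIEquiv K Z Y := by
  obtain ⟨F, hD⟩ := h.exists_symmDiff_subset_stabilizer_mul hY.1
  exact (hFin_stabilizer_of_symmDiff_subset hY hZ hD).of_subset_mul F
    ((symmDiff_comm Z Y).subset.trans hD)

theorem smul_eq_of_smul_subset {g : G} {m : ℕ} (hsub : g • X ⊆ X) (hm : 0 < m)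
    (hpow : g ^ m • X = X) : g • X = X := by
  have hiter : ∀ n : ℕ, g ^ n • X ⊆ X := fun n => by
    induction n with
    | zero => rw [pow_zero, one_smul]
    | succ n ih =>
      calc g ^ (n + 1) • X = g ^ n • g • X := by rw [pow_succ, mul_smul]
        _ ⊆ g ^ n • X := Set.smul_set_mono hsub
        _ ⊆ X := ih
  refine hsub.antisymm ?_
  calc X = g ^ m • X := hpow.symm
    _ = g • g ^ (m - 1) • X := by rw [smul_smul, ← pow_succ', Nat.sub_add_cancel hm]
    _ ⊆ g • X := Set.smul_set_mono (hiter _)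

theorem smul_eq_of_goodPos {g : G} {m : ℕ} (hgp : GoodPos1 K Z) (hZ : ¬ HFin K Z)
    (hZc : ¬ HFin K Zᶜ) (hsm : HFin K (Z ∆ (g • Z))) (hm : 0 < m) (hpow : g ^ m • Z = Z) :
    g • Z = Z := by
  have hsmall : ∀ W ⊆ Z ∆ (g • Z), SmallFor (fun _ : Unit => K) (fun _ : Unit => Z) Z W :=
    fun W hW => ⟨(), 1, Or.inl (one_smul G Z).symm, by rw [inv_one, one_smul]; exact hsm.mono_s5 hW⟩
  -- the small corners are `Z ∩ (g • Z)ᶜ` and `Zᶜ ∩ g • Z`, entries 1 and 2 of the list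
  have hcorner := hgp Z ⟨(), 1, Or.inl (one_smul G Z).symm⟩ (g • Z) ⟨(), g, Or.inl rfl⟩ 1 2
    (by decide) (hsmall _ fun x hx => Or.inl hx) (hsmall _ fun x hx => Or.inr hx.symm)
  rcases hcorner with hdisj | hZg | hgZ | hcodisj
  · exact absurd (hsm.mono_s5 fun x hx => Or.inl ⟨hx, fun hgx => hdisj.subset ⟨hx, hgx⟩⟩) hZ
  · have hinv : g⁻¹ • Z = Z := smul_eq_of_smul_subset
      (Set.subset_smul_set_iff.mp fun x hx => by_contra fun hgx => hZg.subset ⟨hx, hgx⟩) hm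
      (by rw [inv_pow, inv_smul_eq_iff, hpow])
    exact (inv_smul_eq_iff.mp hinv).symm
  · exact smul_eq_of_smul_subset (fun x hgx => by_contra fun hx => hgZ.subset ⟨hx, hgx⟩) hm hpow
  · refine absurd (hsm.mono_s5 fun x hx => ?_) hZc
    by_contra hxD
    exact hcodisj.subset ⟨hx, fun hgx => hxD (Or.inr ⟨hgx, hx⟩)⟩

theorem AIEquiv.smul_eq_of_smul_eq {g : G} (h : AIEquiv H Y Z) (hY : NontrivAI H Y)
    (hZ : NontrivAI K Z) (hgp : GoodPos1 K Z) (hg : g • Y = Y) : g • Z = Z := by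
  obtain ⟨F, hD⟩ := h.exists_symmDiff_subset_stabilizer_mul hY.1
  have hJ := hFin_stabilizer_of_symmDiff_subset hY hZ.1 hD
  have hgJ : g ∈ stabilizer G Y := hg
  obtain ⟨m, hm, hgm⟩ := hJ.exists_pow_mem fun n => pow_mem hgJ n
  exact smul_eq_of_goodPos hgp hZ.2.1 hZ.2.2
    ((hJ.of_subset_mul F le_rfl).mono_s5 (symmDiff_smul_subset hD hgJ)) hm (hZ.1.1 _ hgm)

end AlmostInvariant

theorem equivalent_good_position_implies_same_stabiliser_general
    {G : Type*} [Group G] (H K : Subgroup G) (Y Z : Set G)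
    (hY : NontrivAI H Y) (hZ : NontrivAI K Z)
    (hequiv : AIEquiv H Y Z)
    (hgpY : GoodPos1 H Y) (hgpZ : GoodPos1 K Z) :
    {g : G | g • Y = Y} = {g : G | g • Z = Z} := by
  ext g
  exact ⟨hequiv.smul_eq_of_smul_eq hY hZ hgpZ,
    (hequiv.symm_of_nontrivAI hY hZ.1).smul_eq_of_smul_eq hZ hY hgpY⟩

/-- Equivalent almost invariant sets which are each in good position have equal
stabilisers. -/
theorem equivalent_good_position_implies_same_stabiliser
    {G : Type*} [Group G] (hG : Group.FG G) (H K : Subgroup G) (Y Z : Set G)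
    (hY : NontrivAI H Y) (hZ : NontrivAI K Z)
    (hequiv : AIEquiv H Y Z)
    (hgpY : GoodPos1 H Y) (hgpZ : GoodPos1 K Z) :
    {g : G | g • Y = Y} = {g : G | g • Z = Z} :=
  equivalent_good_position_implies_same_stabiliser_general H K Y Z hY hZ hequiv hgpY hgpZ
end

section
/- Let G be a finitely generated group with finitely generated subgroups H_1,…,H_n, for i = 1,…,n let X_i be a nontrivial H_i-almost invariant subset of G, suppose the family is in good position, and let E = E(X_1,…,X_n). Fix a finite generating set S of G with word metric d, fix g ∈ G, and suppose R > 0 satisfies: for all A, B ∈ E with A ≤ B and all g' ∈ A with N_R(g') ⊆ A, one has g' ∈ B. Let E_R = {A ∈ E : some edge of the Cayley graph of (G,S) with one endpoint in A and the other endpoint in A* has an endpoint in N_R(g)}, let E_R* = E − E_R, and let U_g = {A ∈ E_R* : g ∈ A}. Then U_g is an ultrafilter on E_R* with respect to the restriction of ≤ and the complementation involution. -/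
open Pointwise

universe u v

/-! An element `A` of `E_R*` has no coboundary edge meeting `N_R(g)`, so the ball `N_R(g)`,
being connected in the Cayley graph, lies entirely in `A` or entirely in `A*`. Hence exactly one
of `A`, `A*` contains `g`, and if `g ∈ A ≤ B` then the choice of `R` forces `g ∈ B`. -/

section Ultrafilter

variable {G : Type*} [Group G] {ι : Type*} {X : ι → Set G} {S : Finset G} {R : ℕ} {g : G}

lemma compl_mem_ESet {A : Set G} (hA : A ∈ ESet X) : Aᶜ ∈ ESet X := by
  obtain ⟨i, a, h | h⟩ := hA
  · exact ⟨i, a, Or.inr (by rw [h])⟩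
  · exact ⟨i, a, Or.inl (by rw [h, compl_compl])⟩

lemma bNear_compl_iff (A : Set G) : BNear S R g Aᶜ ↔ BNear S R g A := by
  constructor <;>
  · rintro ⟨x, s, hs, hcross, hball⟩
    exact ⟨x, s, hs, by simpa [or_comm] using hcross, hball⟩

lemma compl_mem_ERstar {A : Set G} (hA : A ∈ ERstar S R g X) : Aᶜ ∈ ERstar S R g X :=
  ⟨compl_mem_ESet hA.1, fun h => hA.2 ((bNear_compl_iff A).mp h)⟩

lemma setOf_inBall_subset_of_not_bNear {A : Set G} (hg : g ∈ A) (hA : ¬ BNear S R g A) :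
    {x | InBall S R g x} ⊆ A := by
  rintro x ⟨l, hl, hlen, rfl⟩
  induction l using List.reverseRecOn with
  | nil => simpa using hg
  | append_singleton l s ih =>
    have hlen' : l.length ≤ R := by
      simp only [List.length_append, List.length_singleton] at hlen; omega
    have hl' : ∀ t ∈ l, t ∈ S ∨ t⁻¹ ∈ S := fun t ht => hl t (by simp [ht])
    have hmem : g * l.prod ∈ A := ih hl' hlen'
    rw [List.prod_append, List.prod_singleton, ← mul_assoc]
    by_contra hout
    exact hA ⟨g * l.prod, s, hl s (by simp), Or.inl ⟨hmem, hout⟩,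
      Or.inl ⟨l, hl', hlen', rfl⟩⟩

lemma mem_UgSet_xor_compl_mem {A : Set G} (hA : A ∈ ERstar S R g X) :
    Xor (A ∈ UgSet S R g X) (Aᶜ ∈ UgSet S R g X) := by
  by_cases hg : g ∈ A
  · exact Or.inl ⟨⟨hA, hg⟩, fun h => h.2 hg⟩
  · exact Or.inr ⟨⟨compl_mem_ERstar hA, hg⟩, fun h => hg h.2⟩

end Ultrafilter

theorem Ug_is_ultrafilter_general
    {G : Type*} [Group G] {n : ℕ} (S : Finset G)
    (H : Fin n → Subgroup G)
    (X : Fin n → Set G) (g : G) (R : ℕ)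
    (hRP : ∀ A ∈ ESet X, ∀ B ∈ ESet X, LeE H X A B →
      ∀ g' ∈ A, {x : G | InBall S R g' x} ⊆ A → g' ∈ B) :
    (∀ A ∈ ERstar S R g X, Xor' (A ∈ UgSet S R g X) (Aᶜ ∈ UgSet S R g X)) ∧
      (∀ A ∈ UgSet S R g X, ∀ B ∈ ERstar S R g X,
        LeE H X A B → B ∈ UgSet S R g X) := by
  refine ⟨fun A hA => mem_UgSet_xor_compl_mem hA, ?_⟩
  rintro A ⟨hA, hgA⟩ B hB hAB
  exact ⟨hB, hRP A hA.1 B hB.1 hAB g hgA (setOf_inBall_subset_of_not_bNear hgA hA.2)⟩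

/-- `U_g` is an ultrafilter on `E_R*` with respect to almost inclusion. -/
theorem Ug_is_ultrafilter
    {G : Type*} [Group G] {n : ℕ} (S : Finset G)
    (hS : Subgroup.closure (S : Set G) = ⊤)
    (H : Fin n → Subgroup G) (hfg : ∀ i, (H i).FG)
    (X : Fin n → Set G) (hnt : ∀ i, NontrivAI (H i) (X i))
    (hgp : GoodPos H X) (g : G) (R : ℕ) (hR : 0 < R)
    (hRP : ∀ A ∈ ESet X, ∀ B ∈ ESet X, LeE H X A B →
      ∀ g' ∈ A, {x : G | InBall S R g' x} ⊆ A → g' ∈ B) :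
    (∀ A ∈ ERstar S R g X, Xor' (A ∈ UgSet S R g X) (Aᶜ ∈ UgSet S R g X)) ∧
      (∀ A ∈ UgSet S R g X, ∀ B ∈ ERstar S R g X,
        LeE H X A B → B ∈ UgSet S R g X) :=
  Ug_is_ultrafilter_general S H X g R hRP
end
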